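/- Let V be a real normed vector space, H a real inner product space, and j : V → H a linear map. Let a : V × V → ℝ be a bilinear form that is coercive with constant α > 0 (a(v,v) ≥ α‖v‖² for all v ∈ V). Let C : V → V be a linear map and κ > 0 a constant such that ‖j(v) − j(C v)‖_H ≤ κ‖v‖ for all v ∈ V. Suppose e ∈ V and f ∈ H satisfy C e = 0 and a(e,e) = ⟨f, j(e)⟩_H. Then ‖e‖ ≤ (κ/α)‖f‖_H. -/

import Mathlib

lemma le_div_of_mul_sq_le_mul {α c x : ℝ} (hα : 0 < α) (hc : 0 ≤ c) (hx : 0 ≤ x)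
    (h : α * x ^ 2 ≤ c * x) : x ≤ c / α := by
  rw [le_div_iff₀ hα]
  rcases hx.eq_or_lt with rfl | hx
  · simpa using hc
  · nlinarith

lemma norm_map_le_of_map_eq_zero {R V H : Type*} [Semiring R] [SeminormedAddCommGroup V]
    [SeminormedAddCommGroup H] [Module R V] [Module R H] (j : V →ₗ[R] H) (C : V →ₗ[R] V)
    {κ : ℝ} (hC : ∀ v : V, ‖j v - j (C v)‖ ≤ κ * ‖v‖) {e : V} (hCe : C e = 0) :
    ‖j e‖ ≤ κ * ‖e‖ := by
  simpa [hCe] using hC e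

/-- Abstract core of Theorem 4.1: energy error estimate for the ideal combined
multiscale method. -/
theorem stmt_1 {V H : Type*} [NormedAddCommGroup V] [NormedSpace ℝ V]
    [NormedAddCommGroup H] [InnerProductSpace ℝ H]
    (j : V →ₗ[ℝ] H) (a : V →ₗ[ℝ] V →ₗ[ℝ] ℝ)
    (α : ℝ) (hα : 0 < α) (hcoer : ∀ v : V, α * ‖v‖ ^ 2 ≤ a v v)
    (C : V →ₗ[ℝ] V) (κ : ℝ) (hκ : 0 < κ)
    (hC : ∀ v : V, ‖j v - j (C v)‖ ≤ κ * ‖v‖)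
    (e : V) (f : H) (hCe : C e = 0)
    (hae : a e e = (inner ℝ f (j e) : ℝ)) :
    ‖e‖ ≤ (κ / α) * ‖f‖ := by
  rw [div_mul_eq_mul_div, mul_comm κ]
  refine le_div_of_mul_sq_le_mul hα (mul_nonneg (norm_nonneg f) hκ.le) (norm_nonneg e) ?_
  calc α * ‖e‖ ^ 2 ≤ a e e := hcoer e
    _ = inner ℝ f (j e) := hae
    _ ≤ ‖f‖ * ‖j e‖ := real_inner_le_norm f (j e)
    _ ≤ ‖f‖ * (κ * ‖e‖) := by gcongr; exact norm_map_le_of_map_eq_zero j C hC hCe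
    _ = ‖f‖ * κ * ‖e‖ := by ring
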